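/- arXiv:2006.02817 — 2 statements merged into one kernel-verified Lean document; each statement's English description precedes it below -/
import Mathlib

section
/- For a prime p ≥ 5, the field Q(sin(2π/p)) equals Q(cos(π/(2p))). -/
/-!
Put `θ = π / (2p)`, so that `sin (2π/p) = cos ((p - 4) θ)` and `4p θ = 2π`. Since `cos (n x)` is
a Chebyshev polynomial in `cos x`, one inclusion is clear; for the other, `p - 4` is invertible
modulo `4p`, so `θ` is an integer multiple of `(p - 4) θ` up to a multiple of `2π`.
-/

open Real Polynomial IntermediateField

theorem cos_int_mul_mem_adjoin (x : ℝ) (n : ℤ) : cos (n * x) ∈ ℚ⟮cos x⟯ := by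
  rw [← Chebyshev.T_real_cos, ← Chebyshev.map_T (algebraMap ℚ ℝ) n, eval_map_algebraMap]
  exact aeval_mem_adjoin_singleton ℚ (cos x) |> algebra_adjoin_le_adjoin ℚ _

theorem adjoin_cos_int_mul_eq {x : ℝ} {m n : ℤ} (hmn : IsCoprime m n) (hx : n * x = 2 * π) :
    ℚ⟮cos (m * x)⟯ = ℚ⟮cos x⟯ := by
  obtain ⟨a, b, hab⟩ := hmn
  have hab' : (a : ℝ) * m + b * n = 1 := by exact_mod_cast hab
  have hcos : cos (a * (m * x)) = cos x := by
    have : (a : ℝ) * (m * x) = x - b * (2 * π) := by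
      rw [← hx]; linear_combination x * hab'
    rw [this, cos_sub_int_mul_two_pi]
  apply le_antisymm <;> rw [adjoin_simple_le_iff]
  · exact cos_int_mul_mem_adjoin x m
  · exact hcos ▸ cos_int_mul_mem_adjoin _ a

theorem isCoprime_sub_four_four_mul {p : ℕ} (hp : p.Prime) (h5 : 5 ≤ p) :
    IsCoprime ((p : ℤ) - 4) (4 * p) := by
  have hodd : Odd ((p : ℤ) - 4) := by
    obtain ⟨k, hk⟩ := hp.odd_of_ne_two (by omega)
    exact ⟨k - 2, by omega⟩
  refine IsCoprime.mul_right ?_ ?_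
  · simpa using (Int.isCoprime_two_right.mpr hodd).pow_right (n := 2)
  · refine (((Nat.prime_iff_prime_int.mp hp).irreducible.coprime_iff_not_dvd).mpr ?_).symm
    intro hdvd
    have := Int.le_of_dvd (by norm_num) (dvd_sub_self_left.mp hdvd)
    omega

theorem stmt_0 (p : ℕ) (hp : p.Prime) (h5 : 5 ≤ p) :
    IntermediateField.adjoin ℚ {Real.sin (2 * π / p)} =
      IntermediateField.adjoin ℚ {Real.cos (π / (2 * p))} := by
  have hp0 : (p : ℝ) ≠ 0 := by exact_mod_cast hp.ne_zero
  have hsin : sin (2 * π / p) = cos (((p : ℤ) - 4 : ℤ) * (π / (2 * p))) := by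
    rw [← cos_pi_div_two_sub]; congr 1; push_cast; field_simp; ring
  rw [hsin]
  refine adjoin_cos_int_mul_eq (isCoprime_sub_four_four_mul hp h5) ?_
  push_cast; field_simp; ring
end

section
/- For any embedding τ : Q(cos(2π/p)) → ℝ different from the inclusion (where p ≥ 5 is prime), one has τ(cos(2π/p)) = cos(2πl/p) for some integer l with 2 ≤ l ≤ (p-1)/2, and consequently τ(cos(2π/p) - 1 + 32/p²) < 0. -/
/-!
`x = τ(cos(2π/p))` is again a root of `T_p - 1` (Chebyshev), whose real roots are the
`cos(2πl/p)` with `0 ≤ 2l ≤ p`. Since `τ` is injective and fixes `ℚ`, `x ≠ ±1`, which rules out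
`l = 0` and `2l = p`; and `l = 1` would make `τ` agree with the inclusion on the generator.
For `l ≥ 2`, `x ≤ cos(4π/p) = 1 - 2 sin²(2π/p)`, and Jordan's inequality `sin(2π/p) > 4/p`
gives `x < 1 - 32/p²`.
-/

open Real Polynomial Polynomial.Chebyshev

theorem Polynomial.Chebyshev.eval_T_apply {R S : Type*} [CommRing R] [CommRing S] (f : R →+* S)
    (x : R) (n : ℤ) : (T S n).eval (f x) = f ((T R n).eval x) := by
  rw [← map_T f, eval_map, eval₂_at_apply]

theorem Polynomial.Chebyshev.eval_T_apply_eq_one_iff {K L : Type*} [Field K] [CommRing L]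
    [Nontrivial L] (f : K →+* L) (x : K) (n : ℤ) :
    (T L n).eval (f x) = 1 ↔ (T K n).eval x = 1 := by
  rw [eval_T_apply, map_eq_one_iff f f.injective]

theorem Polynomial.Chebyshev.eval_T_real_cos_two_pi_div {n : ℕ} (hn : n ≠ 0) :
    (T ℝ n).eval (cos (2 * π / n)) = 1 := by
  rw [T_real_cos, Int.cast_natCast, mul_div_cancel₀ _ (by exact_mod_cast hn), cos_two_pi]

theorem Polynomial.Chebyshev.exists_eq_cos_of_eval_T_real_eq_one {n : ℕ} (hn : n ≠ 0) {x : ℝ}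
    (hx : (T ℝ n).eval x = 1) : ∃ l : ℕ, 2 * l ≤ n ∧ x = cos (2 * π * l / n) := by
  obtain ⟨k, hkn, ⟨l, rfl⟩, rfl⟩ := (eval_T_real_eq_one_iff hn x).1 hx
  exact ⟨l, by omega, by push_cast; ring_nf⟩

theorem Real.cos_two_pi_div_mem_Ioo {n : ℝ} (hn : 2 < n) : cos (2 * π / n) ∈ Set.Ioo (-1) 1 := by
  have hpos : 0 < 2 * π / n := by positivity
  have hlt : 2 * π / n < π := by
    rw [div_lt_iff₀ (by linarith)]
    nlinarith [pi_pos]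
  constructor
  · simpa using cos_lt_cos_of_nonneg_of_le_pi hpos.le le_rfl hlt
  · simpa using cos_lt_cos_of_nonneg_of_le_pi le_rfl hlt.le hpos

theorem Real.cos_two_pi_mul_div_lt {n l : ℝ} (hn : 4 < n) (hl : 2 ≤ l) (hln : 2 * l ≤ n) :
    cos (2 * π * l / n) < 1 - 32 / n ^ 2 := by
  have hn0 : 0 < n := by linarith
  set θ := 2 * π / n with hθ
  have hθ0 : 0 < θ := by positivity
  have hθπ : θ < π / 2 := by
    rw [hθ, div_lt_div_iff₀ hn0 two_pos]
    nlinarith [pi_pos]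
  have hsin : 4 / n < sin θ := by
    have h := mul_lt_sin hθ0 hθπ
    rwa [hθ, show 2 / π * (2 * π / n) = 4 / n by field_simp; ring] at h
  have hanti : cos (2 * π * l / n) ≤ cos (2 * θ) := by
    apply cos_le_cos_of_nonneg_of_le_pi (by positivity)
    · rw [div_le_iff₀ hn0]
      nlinarith [pi_pos]
    · rw [hθ, show 2 * (2 * π / n) = 2 * π * 2 / n by ring]
      gcongr
  have hsq : (4 / n) ^ 2 < sin θ ^ 2 := pow_lt_pow_left₀ hsin (by positivity) two_ne_zero
  calc cos (2 * π * l / n) ≤ cos (2 * θ) := hanti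
    _ = 1 - 2 * sin θ ^ 2 := by rw [cos_two_mul, cos_sq']; ring
    _ < 1 - 32 / n ^ 2 := by
      rw [div_pow] at hsq
      linarith [show (32 : ℝ) / n ^ 2 = 2 * (4 ^ 2 / n ^ 2) by ring]

theorem IntermediateField.ringHom_eq_subtype_of_apply_eq {L : Type*} [Field L] [CharZero L]
    {F : IntermediateField ℚ L} {α : L} (hF : F = IntermediateField.adjoin ℚ {α}) {c : F}
    (hc : (c : L) = α) {τ : F →+* L} (hτc : τ c = α) : τ = F.subtype := by
  have h : τ.toRatAlgHom = F.val.toRingHom.toRatAlgHom := by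
    refine IntermediateField.algHom_ext_of_eq_adjoin ℚ hF fun y hy => ?_
    obtain rfl := Set.mem_singleton_iff.1 hy
    exact (congrArg τ (Subtype.ext hc.symm)).trans hτc
  exact RingHom.ext fun a => congrArg (fun g : F →ₐ[ℚ] L => g a) h

theorem IntermediateField.exists_apply_eq_cos_two_pi_mul_div {n : ℕ} (hn : 2 < n)
    {F : IntermediateField ℚ ℝ} (hF : F = IntermediateField.adjoin ℚ {cos (2 * π / n)}) {c : F}
    (hc : (c : ℝ) = cos (2 * π / n)) {τ : F →+* ℝ} (hτ : τ ≠ F.subtype) :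
    ∃ l : ℕ, 2 ≤ l ∧ 2 * l < n ∧ τ c = cos (2 * π * l / n) := by
  have hT : (T ℝ n).eval (τ c) = 1 := by
    rw [eval_T_apply_eq_one_iff, ← eval_T_apply_eq_one_iff F.subtype, F.coe_subtype, hc]
    exact eval_T_real_cos_two_pi_div (by omega)
  obtain ⟨l, hln, hτc⟩ := exists_eq_cos_of_eval_T_real_eq_one (by omega) hT
  obtain ⟨hc_neg_one, hc_one⟩ := cos_two_pi_div_mem_Ioo (n := n) (by exact_mod_cast hn)
  have hτc_one : τ c ≠ 1 := by
    rw [Ne, τ.injective.eq_iff' (map_one τ)]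
    rintro rfl
    simp [← hc] at hc_one
  have hτc_neg_one : τ c ≠ -1 := by
    rw [Ne, τ.injective.eq_iff' (by rw [map_neg, map_one])]
    rintro rfl
    simp [← hc] at hc_neg_one
  have hl0 : l ≠ 0 := by
    rintro rfl
    simp [hτc] at hτc_one
  have hl1 : l ≠ 1 := by
    rintro rfl
    exact hτ (ringHom_eq_subtype_of_apply_eq hF hc (by simpa using hτc))
  have hln' : 2 * l ≠ n := by
    rintro rfl
    refine hτc_neg_one ?_
    rw [hτc, Nat.cast_mul, Nat.cast_ofNat, show 2 * π * l / (2 * l) = π by field_simp, cos_pi]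
  exact ⟨l, by omega, by omega, hτc⟩

theorem stmt_16_general (p : ℕ) (h5 : 5 ≤ p)
    (F : IntermediateField ℚ ℝ) (hF : F = IntermediateField.adjoin ℚ {Real.cos (2 * π / p)})
    (c : F) (hc : (c : ℝ) = Real.cos (2 * π / p))
    (τ : F →+* ℝ) (hτ : τ ≠ F.subtype) :
    (∃ l : ℕ, 2 ≤ l ∧ l ≤ (p - 1) / 2 ∧ τ c = Real.cos (2 * π * l / p)) ∧
      τ (c - 1 + 32 / (p : F) ^ 2) < 0 := by
  obtain ⟨l, hl, hlp, hτc⟩ :=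
    IntermediateField.exists_apply_eq_cos_two_pi_mul_div (by omega) hF hc hτ
  refine ⟨⟨l, hl, by omega, hτc⟩, ?_⟩
  have hcos := cos_two_pi_mul_div_lt (n := p) (l := l) (by exact_mod_cast h5)
    (by exact_mod_cast hl) (by exact_mod_cast hlp.le)
  simp only [map_add, map_sub, map_one, map_div₀, map_pow, map_natCast, map_ofNat, hτc]
  linarith

theorem stmt_16 (p : ℕ) (hp : p.Prime) (h5 : 5 ≤ p)
    (F : IntermediateField ℚ ℝ) (hF : F = IntermediateField.adjoin ℚ {Real.cos (2 * π / p)})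
    (c : F) (hc : (c : ℝ) = Real.cos (2 * π / p))
    (τ : F →+* ℝ) (hτ : τ ≠ F.subtype) :
    (∃ l : ℕ, 2 ≤ l ∧ l ≤ (p - 1) / 2 ∧ τ c = Real.cos (2 * π * l / p)) ∧
      τ (c - 1 + 32 / (p : F) ^ 2) < 0 :=
  stmt_16_general p h5 F hF c hc τ hτ
end
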